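/- Let f be a natural number, N = 3f+1, and consider a directed graph whose vertices are partitioned into 'rounds'. Suppose U is the set of units at round r+1 created by honest nodes with |U| = 2f+1, the round-r units created by honest nodes form a set H with |H| = 2f+1 containing no two units with the same creator, and each unit in U has parents created by at least 2f+1 pairwise distinct nodes among the N nodes. Then there exists a unit U₀ ∈ H such that at least f+1 units of U have U₀ as a parent. -/
import Mathlib


theorem single_unit_spread (f : ℕ) {P α : Type*} [Fintype P] [DecidableEq P] [DecidableEq α]
    (hP : Fintype.card P = 3 * f + 1)
    (creator : α → P) (honest : Finset P) (hhonest : honest.card = 2 * f + 1)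
    (R U : Finset α) (parents : α → Finset α)
    (hU : U.card = 2 * f + 1)
    (hUhonest : ∀ u ∈ U, creator u ∈ honest)
    (hH : (R.filter (fun x => creator x ∈ honest)).card = 2 * f + 1)
    (hinj : ∀ x ∈ R.filter (fun x => creator x ∈ honest),
      ∀ y ∈ R.filter (fun x => creator x ∈ honest), creator x = creator y → x = y)
    (hpar : ∀ u ∈ U, parents u ⊆ R ∧ 2 * f + 1 ≤ ((parents u).image creator).card) :
    ∃ U₀ ∈ R.filter (fun x => creator x ∈ honest),
      f + 1 ≤ (U.filter (fun u => U₀ ∈ parents u)).card := by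
  classical
  set H := R.filter (fun x => creator x ∈ honest) with hHdef
  by_contra hcon
  push_neg at hcon
  have hub : ∀ h ∈ H, (U.filter (fun u => h ∈ parents u)).card ≤ f := by
    intro h hh
    have := hcon h hh
    omega
  have key : ∀ u ∈ U, f + 1 ≤ (H.filter (fun h => h ∈ parents u)).card := by
    intro u hu
    obtain ⟨hsub, hcard⟩ := hpar u hu
    have h1 : (((parents u).image creator).filter (fun p => p ∈ honest)).card
        ≤ ((H.filter (fun h => h ∈ parents u)).image creator).card := by
      apply Finset.card_le_card
      intro p hp
      simp only [Finset.mem_filter, Finset.mem_image] at hp ⊢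
      obtain ⟨⟨x, hx, rfl⟩, hph⟩ := hp
      exact ⟨x, ⟨Finset.mem_filter.mpr ⟨hsub hx, hph⟩, hx⟩, rfl⟩
    have h2 : ((H.filter (fun h => h ∈ parents u)).image creator).card
        ≤ (H.filter (fun h => h ∈ parents u)).card := Finset.card_image_le
    have h4 : (((parents u).image creator).filter (fun p => p ∉ honest)).card ≤ f := by
      have hsub2 : ((parents u).image creator).filter (fun p => p ∉ honest) ⊆ honestᶜ := by
        intro p hp
        simp only [Finset.mem_filter] at hp
        simpa [Finset.mem_compl] using hp.2
      have := Finset.card_le_card hsub2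
      rw [Finset.card_compl, hP, hhonest] at this
      omega
    have h5 := Finset.card_filter_add_card_filter_not
      (s := (parents u).image creator) (p := fun p => p ∈ honest)
    omega
  have sum_eq : ∑ h ∈ H, (U.filter (fun u => h ∈ parents u)).card
      = ∑ u ∈ U, (H.filter (fun h => h ∈ parents u)).card := by
    simp_rw [Finset.card_filter]
    rw [Finset.sum_comm]
  have lb : U.card * (f + 1) ≤ ∑ u ∈ U, (H.filter (fun h => h ∈ parents u)).card := by
    calc U.card * (f + 1) = ∑ _u ∈ U, (f + 1) := by rw [Finset.sum_const, smul_eq_mul]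
    _ ≤ _ := Finset.sum_le_sum key
  have ub : ∑ h ∈ H, (U.filter (fun u => h ∈ parents u)).card ≤ H.card * f := by
    calc ∑ h ∈ H, (U.filter (fun u => h ∈ parents u)).card ≤ ∑ _h ∈ H, f :=
      Finset.sum_le_sum hub
    _ = H.card * f := by rw [Finset.sum_const, smul_eq_mul]
  rw [hU] at lb
  rw [hH] at ub
  rw [sum_eq] at ub
  nlinarith [lb, ub]
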